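/- Let $S'$ be an infinite semigroup with $S' + S'$ finite. Then $S'$ contains an injective sequence $(a_n)$ such that $FS_{\ge 2}(a_n) := \{a_{i_1}+\dots+a_{i_m} : m \ge 2, i_1 < \dots < i_m\}$ is finite; consequently the family of proper IP sets of $S'$ is not partition regular. -/

import Mathlib

/-- The ordered sum `a_{i_1} + ⋯ + a_{i_m}` over a finite index set
`F = {i_1 < ⋯ < i_m}` (junk value `a 0` if `F = ∅`). -/
def ordsum {S : Type*} [AddSemigroup S] (a : ℕ → S) (F : Finset ℕ) : S :=
  match F.sort (· ≤ ·) with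
  | [] => a 0
  | i :: l => l.foldl (fun s j => s + a j) (a i)

/-- `F < G`: every element of `F` is smaller than every element of `G`. -/
def FinsetLT (F G : Finset ℕ) : Prop := ∀ i ∈ F, ∀ j ∈ G, i < j

/-- `FS(a_1, a_2, …)`: the set of all finite ordered sums of the sequence `a`. -/
def FSset {S : Type*} [AddSemigroup S] (a : ℕ → S) : Set S :=
  {s | ∃ F : Finset ℕ, F.Nonempty ∧ ordsum a F = s}

/-- `FS(a_n, a_{n+1}, …)`: finite ordered sums with all indices `≥ n`. -/
def FStail {S : Type*} [AddSemigroup S] (a : ℕ → S) (n : ℕ) : Set S :=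
  {s | ∃ F : Finset ℕ, F.Nonempty ∧ (∀ i ∈ F, n ≤ i) ∧ ordsum a F = s}

/-- A sequence is proper if `a_{F₁} ≠ a_{F₂}` whenever `F₁ < F₂`. -/
def IsProperSeq {S : Type*} [AddSemigroup S] (a : ℕ → S) : Prop :=
  ∀ F G : Finset ℕ, F.Nonempty → G.Nonempty → FinsetLT F G →
    ordsum a F ≠ ordsum a G

/-- `b` is a sumsequence of `a`: `b_k = a_{F_k}` for finite index sets `F₁ < F₂ < ⋯`. -/
def IsSumseq {S : Type*} [AddSemigroup S] (a b : ℕ → S) : Prop :=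
  ∃ F : ℕ → Finset ℕ, (∀ k, (F k).Nonempty) ∧
    (∀ k, FinsetLT (F k) (F (k + 1))) ∧ (∀ k, b k = ordsum a (F k))


/-- A proper IP set: contains `FS(b)` for an injective sequence `b`. -/
def IsProperIP {S : Type*} [AddSemigroup S] (A : Set S) : Prop :=
  ∃ b : ℕ → S, Function.Injective b ∧ FSset b ⊆ A

/-- Partition regularity of the family of proper IP sets of `S`. -/
def ProperIPPartReg (S : Type*) [AddSemigroup S] : Prop :=
  ∀ A : Set S, IsProperIP A → ∀ (k : ℕ) (c : S → Fin k),
    ∃ i : Fin k, IsProperIP {s ∈ A | c s = i}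

/-- `FS(b_0, …, b_{n-1})`: ordered sums over nonempty `F ⊆ {0, …, n-1}`. -/
def FSfin {S : Type*} [AddSemigroup S] (a : ℕ → S) (n : ℕ) : Set S :=
  {s | ∃ F : Finset ℕ, F.Nonempty ∧ F ⊆ Finset.range n ∧ ordsum a F = s}

/-- `FS_{≥2}(a)`: ordered sums with at least two summands. -/
def FS2set {S : Type*} [AddSemigroup S] (a : ℕ → S) : Set S :=
  {s | ∃ F : Finset ℕ, 2 ≤ F.card ∧ ordsum a F = s}


/-!
Any sum with at least two summands lies in `S + S`, so for an injective enumeration `a` of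
infinitely many elements `FS_{≥2}(a)` is finite. Split `FS(a)` into `FS_{≥2}(a)` and the rest.
The first part is finite, hence contains no proper IP set. The rest consists of single terms
`a m`; if it contained `FS(b)` with `b` injective, then `b k = a (m k)` with `m` injective, and
choosing `l` with `m 0 < m l` makes `b 0 + b l = a (m 0) + a (m l)` a sum of two terms.
-/

section FiniteSums

variable {S : Type*} [AddSemigroup S]

lemma ordsum_singleton (a : ℕ → S) (i : ℕ) : ordsum a {i} = a i := by
  simp [ordsum, Finset.sort_singleton]

lemma ordsum_pair (a : ℕ → S) {i j : ℕ} (hij : i < j) : ordsum a {i, j} = a i + a j := by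
  have hsort : Finset.sort ({i, j} : Finset ℕ) (· ≤ ·) = [i, j] := by
    rw [Finset.sort_insert (· ≤ ·) (by simpa using hij.le) (by simpa using hij.ne),
      Finset.sort_singleton]
  simp [ordsum, hsort]

lemma foldl_add_mem_sumset (a : ℕ → S) :
    ∀ (l : List ℕ) {s : S}, (∃ u v, s = u + v) →
      ∃ u v, l.foldl (fun s j => s + a j) s = u + v
  | [], _, hs => hs
  | j :: l, s, _ => foldl_add_mem_sumset a l ⟨s, a j, rfl⟩

lemma FS2set_subset_sumset (a : ℕ → S) : FS2set a ⊆ {x : S | ∃ u v, x = u + v} := by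
  rintro x ⟨F, hF, rfl⟩
  rw [← Finset.length_sort (· ≤ ·)] at hF
  unfold ordsum
  match hl : F.sort (· ≤ ·), hF with
  | i :: j :: l, _ => exact foldl_add_mem_sumset a l ⟨a i, a j, rfl⟩

lemma add_mem_FSset (a : ℕ → S) {i j : ℕ} (hij : i < j) : a i + a j ∈ FSset a :=
  ⟨{i, j}, Finset.insert_nonempty _ _, ordsum_pair a hij⟩

lemma add_mem_FS2set (a : ℕ → S) {i j : ℕ} (hij : i < j) : a i + a j ∈ FS2set a :=
  ⟨{i, j}, by rw [Finset.card_pair hij.ne], ordsum_pair a hij⟩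

lemma range_subset_FSset (a : ℕ → S) : Set.range a ⊆ FSset a := by
  rintro _ ⟨i, rfl⟩
  exact ⟨{i}, Finset.singleton_nonempty i, ordsum_singleton a i⟩

lemma FSset_diff_FS2set_subset_range (a : ℕ → S) : FSset a \ FS2set a ⊆ Set.range a := by
  rintro _ ⟨⟨F, hF, rfl⟩, hnot⟩
  have hcard : F.card = 1 := by
    by_contra hne
    exact hnot ⟨F, by have := hF.card_pos; omega, rfl⟩
  obtain ⟨i, rfl⟩ := Finset.card_eq_one.mp hcard
  exact ⟨i, (ordsum_singleton a i).symm⟩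

lemma IsProperIP.mono {A B : Set S} (hAB : A ⊆ B) (hA : IsProperIP A) : IsProperIP B :=
  let ⟨b, hb, hsub⟩ := hA
  ⟨b, hb, hsub.trans hAB⟩

lemma IsProperIP.infinite {A : Set S} (hA : IsProperIP A) : A.Infinite := by
  obtain ⟨b, hb, hsub⟩ := hA
  exact (Set.infinite_range_of_injective hb).mono ((range_subset_FSset b).trans hsub)

lemma not_isProperIP_FSset_diff_FS2set (a : ℕ → S) : ¬ IsProperIP (FSset a \ FS2set a) := by
  rintro ⟨b, hb, hsub⟩
  have hterm : ∀ k, ∃ m, a m = b k := fun k =>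
    FSset_diff_FS2set_subset_range a (hsub (range_subset_FSset b ⟨k, rfl⟩))
  choose m hm using hterm
  have hm_inj : Function.Injective m := fun k l hkl => hb (by rw [← hm, ← hm, hkl])
  obtain ⟨_, ⟨l, rfl⟩, hl⟩ := (Set.infinite_range_of_injective hm_inj).exists_gt (m 0)
  have hl_pos : 0 < l := Nat.pos_of_ne_zero (by rintro rfl; exact lt_irrefl _ hl)
  have hsum := hsub (add_mem_FSset b hl_pos)
  rw [← hm, ← hm] at hsum
  exact hsum.2 (add_mem_FS2set a hl)

theorem not_properIPPartReg_of_finite_FS2set {a : ℕ → S} (ha : Function.Injective a)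
    (hfin : (FS2set a).Finite) : ¬ ProperIPPartReg S := by
  classical
  intro hreg
  obtain ⟨i, hi⟩ := hreg (FSset a) ⟨a, ha, subset_rfl⟩ 2
    (fun s => if s ∈ FS2set a then 1 else 0)
  fin_cases i
  · refine not_isProperIP_FSset_diff_FS2set a (hi.mono ?_)
    rintro s ⟨hs, hc⟩
    exact ⟨hs, fun h2 => by simp [h2] at hc⟩
  · refine hi.infinite (hfin.subset ?_)
    rintro s ⟨-, hc⟩
    by_contra h2
    simp [h2] at hc

end FiniteSums

theorem stmt15 {S : Type*} [AddSemigroup S] [Infinite S]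
    (h : {x : S | ∃ a b : S, x = a + b}.Finite) :
    (∃ a : ℕ → S, Function.Injective a ∧ (FS2set a).Finite) ∧
      ¬ ProperIPPartReg S := by
  let a : ℕ ↪ S := Infinite.natEmbedding S
  have hfin : (FS2set a).Finite := h.subset (FS2set_subset_sumset a)
  exact ⟨⟨a, a.injective, hfin⟩, not_properIPPartReg_of_finite_FS2set a.injective hfin⟩
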